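/- arXiv:2604.08715 — 4 statements merged into one kernel-verified Lean document; each statement's English description precedes it below -/
import Mathlib

section
/- Let X and Y be real Banach spaces, let F : X → Y be Fréchet differentiable on X, let ū ∈ X, and let A : Y → X be an injective bounded linear operator. Suppose Y₀, Z₁ ≥ 0 are constants and Z₂ : (0,∞) → [0,∞) is a nondecreasing function such that: (i) ‖A F(ū)‖_X ≤ Y₀; (ii) ‖Id_X − A ∘ DF(ū)‖ ≤ Z₁ in the operator norm on X; (iii) for every r > 0 and every u ∈ X with ‖u − ū‖_X ≤ r one has ‖A ∘ (DF(u) − DF(ū))‖ ≤ Z₂(r)·r. If there exists r₀ > 0 such that (1/2)·Z₂(r₀)·r₀² − (1 − Z₁)·r₀ + Y₀ < 0 and Z₁ + Z₂(r₀)·r₀ < 1, then there exists a unique ũ ∈ X with ‖ũ − ū‖_X ≤ r₀ such that F(ũ) = 0. -/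
/-!
The Newton-like map `T u = u - A (F u)` has exactly the zeros of `F` as fixed points, since `A`
is injective, and its derivative is `I - A ∘ DF u`. Monotonicity of `Z₂` turns hypothesis (iii)
into the Lipschitz bound `‖DT u - DT ū‖ ≤ Z₂(r₀) ‖u - ū‖` on the ball of radius `r₀`. Hence
`‖DT‖ ≤ Z₁ + Z₂(r₀) r₀ < 1` there, so `T` is a contraction, and the second-order Taylor estimate
gives `‖T u - ū‖ ≤ Y₀ + Z₁ r₀ + ½ Z₂(r₀) r₀² ≤ r₀`, so `T` maps the ball into itself.
The Banach fixed-point theorem concludes.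
-/

open Set Metric ContinuousLinearMap

theorem existsUnique_fixedPoint_of_lipschitzOnWith {α : Type*} [MetricSpace α] {f : α → α}
    {s : Set α} {K : NNReal} (hK : K < 1) (hf : LipschitzOnWith K f s) (hsf : MapsTo f s s)
    (hsc : IsComplete s) {x : α} (hx : x ∈ s) : ∃! y, y ∈ s ∧ f y = y := by
  have hg : ContractingWith K (hsf.restrict f s s) := ⟨hK, hf.mapsToRestrict hsf⟩
  obtain ⟨y, hys, hy, -⟩ := hg.exists_fixedPoint' hsc hsf hx (edist_ne_top _ _)
  refine ⟨y, ⟨hys, hy⟩, fun z ⟨hzs, hz⟩ => ?_⟩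
  exact congrArg Subtype.val
    (hg.fixedPoint_unique' (x := ⟨z, hzs⟩) (y := ⟨y, hys⟩) (Subtype.ext hz) (Subtype.ext hy))

section Taylor

variable {E F : Type*} [NormedAddCommGroup E] [NormedSpace ℝ E]
  [NormedAddCommGroup F] [NormedSpace ℝ F]

theorem norm_image_sub_sub_fderiv_le_of_norm_fderiv_sub_le {f : E → F} {f' : E → E →L[ℝ] F}
    {x y : E} {L : ℝ} (hf : ∀ z ∈ segment ℝ x y, HasFDerivAt f (f' z) z)
    (hL : ∀ z ∈ segment ℝ x y, ‖f' z - f' x‖ ≤ L * ‖z - x‖) :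
    ‖f y - f x - f' x (y - x)‖ ≤ L / 2 * ‖y - x‖ ^ 2 := by
  set v := y - x
  have hseg : ∀ t ∈ Icc (0 : ℝ) 1, x + t • v ∈ segment ℝ x y := fun t ht => by
    rw [segment_eq_image']
    exact ⟨t, ht, rfl⟩
  set φ : ℝ → F := fun t => f (x + t • v) - f x - t • f' x v
  have hφ : ∀ t ∈ Icc (0 : ℝ) 1, HasDerivAt φ ((f' (x + t • v) - f' x) v) t := by
    intro t ht
    have hγ : HasDerivAt (fun t : ℝ => x + t • v) v t := by
      simpa using ((hasDerivAt_id t).smul_const v).const_add x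
    have hlin : HasDerivAt (fun t : ℝ => t • f' x v) (f' x v) t := by
      simpa using (hasDerivAt_id t).smul_const (f' x v)
    rw [sub_apply]
    exact (((hf _ (hseg t ht)).comp_hasDerivAt t hγ).sub_const (f x)).sub hlin
  have hB : ∀ t, HasDerivAt (fun t => L / 2 * ‖v‖ ^ 2 * t ^ 2) (L * ‖v‖ ^ 2 * t) t := by
    intro t
    exact ((hasDerivAt_pow 2 t).const_mul (L / 2 * ‖v‖ ^ 2)).congr_deriv (by norm_num; ring)
  have hbound : ∀ t ∈ Ico (0 : ℝ) 1, ‖(f' (x + t • v) - f' x) v‖ ≤ L * ‖v‖ ^ 2 * t := by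
    intro t ht
    calc ‖(f' (x + t • v) - f' x) v‖ ≤ ‖f' (x + t • v) - f' x‖ * ‖v‖ := le_opNorm _ _
      _ ≤ L * ‖x + t • v - x‖ * ‖v‖ := by
          gcongr
          exact hL _ (hseg t (Ico_subset_Icc_self ht))
      _ = L * ‖v‖ ^ 2 * t := by
          rw [add_sub_cancel_left, norm_smul, Real.norm_of_nonneg ht.1]
          ring
  have hφ1 := image_norm_le_of_norm_deriv_right_le_deriv_boundary
    (fun t ht => (hφ t ht).continuousAt.continuousWithinAt)
    (fun t ht => (hφ t (Ico_subset_Icc_self ht)).hasDerivWithinAt) (by simp [φ]) hB hbound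
    (right_mem_Icc.2 zero_le_one)
  simpa [φ, v] using hφ1

end Taylor

section RadiiPolynomial

variable {E : Type*} [NormedAddCommGroup E] [NormedSpace ℝ E]
  {T : E → E} {DT : E → E →L[ℝ] E} {c : E} {r Y₀ Z₁ L : ℝ}

theorem mapsTo_closedBall_of_radii_polynomial_nonpos
    (hT : ∀ u ∈ closedBall c r, HasFDerivAt T (DT u) u) (hY : ‖T c - c‖ ≤ Y₀)
    (hZ₁ : ‖DT c‖ ≤ Z₁) (hL : ∀ u ∈ closedBall c r, ‖DT u - DT c‖ ≤ L * ‖u - c‖) (hL0 : 0 ≤ L)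
    (hpoly : 1 / 2 * L * r ^ 2 - (1 - Z₁) * r + Y₀ ≤ 0) :
    MapsTo T (closedBall c r) (closedBall c r) := by
  intro u hu
  have hu' : ‖u - c‖ ≤ r := mem_closedBall_iff_norm.1 hu
  have hseg : segment ℝ c u ⊆ closedBall c r :=
    (convex_closedBall c r).segment_subset (mem_closedBall_self ((norm_nonneg _).trans hu')) hu
  have htaylor := norm_image_sub_sub_fderiv_le_of_norm_fderiv_sub_le
    (fun z hz => hT z (hseg hz)) (fun z hz => hL z (hseg hz))
  have hZ₁0 : 0 ≤ Z₁ := (norm_nonneg _).trans hZ₁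
  rw [mem_closedBall_iff_norm]
  calc ‖T u - c‖ = ‖(T u - T c - DT c (u - c)) + DT c (u - c) + (T c - c)‖ := by
        congr 1; abel
    _ ≤ L / 2 * ‖u - c‖ ^ 2 + Z₁ * ‖u - c‖ + Y₀ :=
        norm_add₃_le.trans (add_le_add_three htaylor ((DT c).le_of_opNorm_le hZ₁ _) hY)
    _ ≤ L / 2 * r ^ 2 + Z₁ * r + Y₀ := by gcongr
    _ ≤ r := by linear_combination hpoly

theorem lipschitzOnWith_closedBall_of_norm_fderiv_sub_le
    (hT : ∀ u ∈ closedBall c r, HasFDerivAt T (DT u) u) (hZ₁ : ‖DT c‖ ≤ Z₁)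
    (hL : ∀ u ∈ closedBall c r, ‖DT u - DT c‖ ≤ L * ‖u - c‖) (hL0 : 0 ≤ L) :
    LipschitzOnWith (Z₁ + L * r).toNNReal T (closedBall c r) := by
  refine (convex_closedBall c r).lipschitzOnWith_of_nnnorm_hasFDerivWithin_le
    (fun u hu => (hT u hu).hasFDerivWithinAt) fun u hu => ?_
  rw [← Real.toNNReal_coe (r := ‖DT u‖₊), coe_nnnorm]
  refine Real.toNNReal_le_toNNReal ?_
  calc ‖DT u‖ ≤ ‖DT c‖ + ‖DT u - DT c‖ := norm_le_norm_add_norm_sub' _ _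
    _ ≤ Z₁ + L * r := by
        gcongr
        exact (hL u hu).trans (by gcongr; exact mem_closedBall_iff_norm.1 hu)

theorem existsUnique_fixedPoint_closedBall_of_radii_polynomial_nonpos [CompleteSpace E]
    (hT : ∀ u ∈ closedBall c r, HasFDerivAt T (DT u) u) (hY : ‖T c - c‖ ≤ Y₀)
    (hZ₁ : ‖DT c‖ ≤ Z₁) (hL : ∀ u ∈ closedBall c r, ‖DT u - DT c‖ ≤ L * ‖u - c‖) (hL0 : 0 ≤ L)
    (hr : 0 ≤ r) (hpoly : 1 / 2 * L * r ^ 2 - (1 - Z₁) * r + Y₀ ≤ 0) (hcontr : Z₁ + L * r < 1) :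
    ∃! u, u ∈ closedBall c r ∧ T u = u :=
  existsUnique_fixedPoint_of_lipschitzOnWith (Real.toNNReal_lt_one.2 hcontr)
    (lipschitzOnWith_closedBall_of_norm_fderiv_sub_le hT hZ₁ hL hL0)
    (mapsTo_closedBall_of_radii_polynomial_nonpos hT hY hZ₁ hL hL0 hpoly)
    isClosed_closedBall.isComplete (mem_closedBall_self hr)

end RadiiPolynomial

theorem norm_le_mul_norm_sub_of_forall_norm_le {X E : Type*} [NormedAddCommGroup X]
    [NormedAddCommGroup E] {g : X → E} {Z : ℝ → ℝ} {c u : X} {r : ℝ}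
    (hZ : ∀ r s : ℝ, 0 < r → r ≤ s → Z r ≤ Z s)
    (hg : ∀ r : ℝ, 0 < r → ∀ u : X, ‖u - c‖ ≤ r → ‖g u‖ ≤ Z r * r) (hgc : g c = 0)
    (hu : ‖u - c‖ ≤ r) : ‖g u‖ ≤ Z r * ‖u - c‖ := by
  rcases (norm_nonneg (u - c)).eq_or_lt with h | h
  · rw [← h, eq_of_sub_eq_zero (norm_eq_zero.1 h.symm), hgc, norm_zero, mul_zero]
  · calc ‖g u‖ ≤ Z ‖u - c‖ * ‖u - c‖ := hg _ h u le_rfl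
      _ ≤ Z r * ‖u - c‖ := by gcongr; exact hZ _ _ h hu

section NewtonMap

variable {X Y : Type*} [NormedAddCommGroup X] [NormedSpace ℝ X]
  [NormedAddCommGroup Y] [NormedSpace ℝ Y]

def newtonMap (A : Y →L[ℝ] X) (F : X → Y) (u : X) : X := u - A (F u)

theorem hasFDerivAt_newtonMap {A : Y →L[ℝ] X} {F : X → Y} {F' : X →L[ℝ] Y} {u : X}
    (hF : HasFDerivAt F F' u) :
    HasFDerivAt (newtonMap A F) (ContinuousLinearMap.id ℝ X - A.comp F') u :=
  (hasFDerivAt_id u).sub (A.hasFDerivAt.comp u hF)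

theorem newtonMap_eq_self_iff {A : Y →L[ℝ] X} {F : X → Y} {u : X} (hA : Function.Injective A) :
    newtonMap A F u = u ↔ F u = 0 := by
  rw [newtonMap, sub_eq_self, map_eq_zero_iff A hA]

end NewtonMap

theorem newton_kantorovich_radii_polynomial_general
    {X Y : Type*} [NormedAddCommGroup X] [NormedSpace ℝ X] [CompleteSpace X]
    [NormedAddCommGroup Y] [NormedSpace ℝ Y]
    (F : X → Y) (DF : X → X →L[ℝ] Y)
    (hDF : ∀ u : X, HasFDerivAt F (DF u) u)
    (ubar : X) (A : Y →L[ℝ] X) (hA : Function.Injective A)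
    (Y₀ Z₁ : ℝ)
    (Z₂ : ℝ → ℝ)
    (hZ₂nonneg : ∀ r : ℝ, 0 < r → 0 ≤ Z₂ r)
    (hZ₂mono : ∀ r s : ℝ, 0 < r → r ≤ s → Z₂ r ≤ Z₂ s)
    (hY : ‖A (F ubar)‖ ≤ Y₀)
    (hZ1 : ‖ContinuousLinearMap.id ℝ X - A.comp (DF ubar)‖ ≤ Z₁)
    (hZ2 : ∀ r : ℝ, 0 < r → ∀ u : X, ‖u - ubar‖ ≤ r →
      ‖A.comp (DF u - DF ubar)‖ ≤ Z₂ r * r)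
    (r₀ : ℝ) (hr₀ : 0 < r₀)
    (hcond1 : (1/2) * Z₂ r₀ * r₀ ^ 2 - (1 - Z₁) * r₀ + Y₀ < 0)
    (hcond2 : Z₁ + Z₂ r₀ * r₀ < 1) :
    ∃! u : X, ‖u - ubar‖ ≤ r₀ ∧ F u = 0 := by
  have hY' : ‖newtonMap A F ubar - ubar‖ ≤ Y₀ := by
    rwa [newtonMap, sub_sub_cancel_left, norm_neg]
  set DT : X → X →L[ℝ] X := fun u => ContinuousLinearMap.id ℝ X - A.comp (DF u)
  have hDT : ∀ u ∈ closedBall ubar r₀, ‖DT u - DT ubar‖ ≤ Z₂ r₀ * ‖u - ubar‖ := by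
    intro u hu
    rw [sub_sub_sub_cancel_left, ← comp_sub, ← norm_neg, ← comp_neg, neg_sub]
    exact norm_le_mul_norm_sub_of_forall_norm_le hZ₂mono hZ2 (by simp)
      (mem_closedBall_iff_norm.1 hu)
  simpa only [mem_closedBall_iff_norm, newtonMap_eq_self_iff hA] using
    existsUnique_fixedPoint_closedBall_of_radii_polynomial_nonpos
      (fun u _ => hasFDerivAt_newtonMap (hDF u)) hY' hZ1 hDT (hZ₂nonneg r₀ hr₀) hr₀.le
      hcond1.le hcond2

/-- Newton–Kantorovich ("radii polynomial") theorem for a Fréchet differentiable map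
`F : X → Y` between real Banach spaces, with approximate solution `ubar` and injective
approximate inverse `A` of the derivative at `ubar`. -/
theorem newton_kantorovich_radii_polynomial
    {X Y : Type*} [NormedAddCommGroup X] [NormedSpace ℝ X] [CompleteSpace X]
    [NormedAddCommGroup Y] [NormedSpace ℝ Y] [CompleteSpace Y]
    (F : X → Y) (DF : X → X →L[ℝ] Y)
    (hDF : ∀ u : X, HasFDerivAt F (DF u) u)
    (ubar : X) (A : Y →L[ℝ] X) (hA : Function.Injective A)
    (Y₀ Z₁ : ℝ) (hY₀ : 0 ≤ Y₀) (hZ₁ : 0 ≤ Z₁)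
    (Z₂ : ℝ → ℝ)
    (hZ₂nonneg : ∀ r : ℝ, 0 < r → 0 ≤ Z₂ r)
    (hZ₂mono : ∀ r s : ℝ, 0 < r → r ≤ s → Z₂ r ≤ Z₂ s)
    (hY : ‖A (F ubar)‖ ≤ Y₀)
    (hZ1 : ‖ContinuousLinearMap.id ℝ X - A.comp (DF ubar)‖ ≤ Z₁)
    (hZ2 : ∀ r : ℝ, 0 < r → ∀ u : X, ‖u - ubar‖ ≤ r →
      ‖A.comp (DF u - DF ubar)‖ ≤ Z₂ r * r)
    (r₀ : ℝ) (hr₀ : 0 < r₀)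
    (hcond1 : (1/2) * Z₂ r₀ * r₀ ^ 2 - (1 - Z₁) * r₀ + Y₀ < 0)
    (hcond2 : Z₁ + Z₂ r₀ * r₀ < 1) :
    ∃! u : X, ‖u - ubar‖ ≤ r₀ ∧ F u = 0 :=
  newton_kantorovich_radii_polynomial_general F DF hDF ubar A hA Y₀ Z₁ Z₂ hZ₂nonneg hZ₂mono hY hZ1
    hZ2 r₀ hr₀ hcond1 hcond2
end

section
/- Let ν > 0, ν₃ > 0 and λ₅, λ₆, λ₇ ∈ ℝ, and set D := (ν·ν₃ − λ₆ + 1)² + 4ν(ν₃λ₆ − ν₃ + λ₅λ₇). If either D < 0, or D ≥ 0 together with ν·ν₃ − λ₆ + 1 > √D, then there exists σ₀ > 0 such that |det l(ξ)| ≥ σ₀ for all ξ ∈ ℝ; in particular the matrix l(ξ) is invertible for every ξ ∈ ℝ. -/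
open Real

/-- The Thomas-model symbol: the 2×2 real matrix `l(ξ)` with parameters
`ν, ν₃, lam₅, lam₆, lam₇` (the paper's ν, ν₃, λ₅, λ₆, λ₇). -/
noncomputable def thomasSymbol (ν ν₃ lam₅ lam₆ lam₇ : ℝ) (ξ : ℝ) : Matrix (Fin 2) (Fin 2) ℝ :=
  !![-ν * (2 * π * ξ) ^ 2 + lam₆ - 1, lam₇; lam₅, -(2 * π * ξ) ^ 2 - ν₃]

/-- Under the root conditions of Lemma 2.2, the determinant of the Thomas symbol is
uniformly bounded away from zero; in particular `l(ξ)` is invertible for every `ξ`. -/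
theorem thomasSymbol_det_uniformly_bounded
    (ν ν₃ lam₅ lam₆ lam₇ : ℝ) (hν : 0 < ν) (hν₃ : 0 < ν₃)
    (D : ℝ) (hD : D = (ν * ν₃ - lam₆ + 1) ^ 2 + 4 * ν * (ν₃ * lam₆ - ν₃ + lam₅ * lam₇))
    (hcase : D < 0 ∨ (0 ≤ D ∧ ν * ν₃ - lam₆ + 1 > Real.sqrt D)) :
    ∃ σ₀ : ℝ, 0 < σ₀ ∧
      (∀ ξ : ℝ, σ₀ ≤ |(thomasSymbol ν ν₃ lam₅ lam₆ lam₇ ξ).det|) ∧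
      (∀ ξ : ℝ, IsUnit (thomasSymbol ν ν₃ lam₅ lam₆ lam₇ ξ)) := by
  set b : ℝ := ν * ν₃ - lam₆ + 1 with hb
  set c : ℝ := ν₃ - ν₃ * lam₆ - lam₅ * lam₇ with hc
  have hdet : ∀ ξ : ℝ, (thomasSymbol ν ν₃ lam₅ lam₆ lam₇ ξ).det
      = ν * ((2 * π * ξ) ^ 2) ^ 2 + b * (2 * π * ξ) ^ 2 + c := by
    intro ξ
    simp [thomasSymbol, Matrix.det_fin_two_of]
    ring
  have key : ∃ σ₀ : ℝ, 0 < σ₀ ∧ ∀ x : ℝ, 0 ≤ x → σ₀ ≤ ν * x ^ 2 + b * x + c := by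
    rcases hcase with h | ⟨hD0, hbs⟩
    · refine ⟨-D / (4 * ν), div_pos (by linarith) (by positivity), fun x hx => ?_⟩
      rw [div_le_iff₀ (by positivity)]
      nlinarith [sq_nonneg (2 * ν * x + b)]
    · have hb0 : 0 < b := lt_of_le_of_lt (Real.sqrt_nonneg D) hbs
      have hD' : D < b ^ 2 := by
        have := Real.sq_sqrt hD0
        nlinarith [Real.sqrt_nonneg D]
      have hc0 : 0 < c := by nlinarith
      exact ⟨c, hc0, fun x hx => by nlinarith⟩
  obtain ⟨σ₀, hσ, hle⟩ := key
  have hle' : ∀ ξ : ℝ, σ₀ ≤ (thomasSymbol ν ν₃ lam₅ lam₆ lam₇ ξ).det := by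
    intro ξ
    rw [hdet ξ]
    exact hle _ (sq_nonneg _)
  refine ⟨σ₀, hσ, fun ξ => (hle' ξ).trans (le_abs_self _), fun ξ => ?_⟩
  rw [Matrix.isUnit_iff_isUnit_det, isUnit_iff_ne_zero]
  exact ne_of_gt (lt_of_lt_of_le hσ (hle' ξ))
end

section
/- Let ν > 0, ν₃ > 0 and λ₅, λ₆, λ₇ ∈ ℝ, and suppose D := (νν₃ − λ₆ + 1)² + 4ν(ν₃λ₆ − ν₃ + λ₅λ₇) < 0. Let z₁ ∈ ℂ be the square root with positive real part of (νν₃ − λ₆ + 1 − i√(−D))/(2ν), and z₂ the square root with positive real part of (νν₃ − λ₆ + 1 + i√(−D))/(2ν) (so z₂ is the complex conjugate of z₁). Set a := min(Re z₁, Re z₂) > 0 and, for d₁, d₂ ∈ ℝ, C₀ := ( |d₁|·|z₁| + |d₂|/|z₁| + |d₁|·|z₂| + |d₂|/|z₂| ) / |2ν(z₁² − z₂²)|. Then for all x ∈ ℝ, | ∫_ℝ (d₁(2πξ)² + d₂)/det l(ξ) · e^{2πiξx} dξ | ≤ C₀ · e^{−a|x|}. -/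
/-!
With `b = νν₃ − λ₆ + 1`, the numbers `z₁², z₂² = (b ∓ i√(−D))/(2ν)` are the roots of
`ν u² + b u − (ν₃λ₆ − ν₃ + λ₅λ₇)`, whose discriminant is `D`, so
`det l(ξ) = ν ((2πξ)² + z₁²)((2πξ)² + z₂²)`.
Partial fractions reduce the integral to two instances of
`∫ e^{2πiξx} / ((2πξ)² + z²) dξ = e^{-z|x|} / (2z)` for `Re z > 0`, which is Fourier inversion
for the two-sided exponential `e^{-z|x|}`: its Fourier transform `2z / (z² + (2πξ)²)` is computed
by splitting the line at `0`. Finally `|e^{-z|x|}| = e^{-Re z |x|} ≤ e^{-a|x|}`.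
-/

open Real Complex
open MeasureTheory Set Filter FourierTransform

section TwoSidedLaplace

variable {w z : ℂ}

lemma integrableOn_Iic_cexp_mul_sub_mul_abs (h : |w.re| < z.re) :
    IntegrableOn (fun v : ℝ => cexp (w * v - z * |v|)) (Iic 0) := by
  refine (integrableOn_exp_mul_complex_Iic (a := w + z) ?_ 0).congr_fun (fun v hv => ?_)
    measurableSet_Iic
  · simp only [add_re]; linarith [neg_abs_le w.re]
  · rw [abs_of_nonpos hv]; push_cast; ring_nf

lemma integrableOn_Ioi_cexp_mul_sub_mul_abs (h : |w.re| < z.re) :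
    IntegrableOn (fun v : ℝ => cexp (w * v - z * |v|)) (Ioi 0) := by
  refine (integrableOn_exp_mul_complex_Ioi (a := w - z) ?_ 0).congr_fun (fun v hv => ?_)
    measurableSet_Ioi
  · simp only [sub_re]; linarith [le_abs_self w.re]
  · rw [abs_of_pos hv]; ring_nf

lemma integrable_cexp_mul_sub_mul_abs (h : |w.re| < z.re) :
    Integrable fun v : ℝ => cexp (w * v - z * |v|) := by
  simpa [Iic_union_Ioi] using
    (integrableOn_Iic_cexp_mul_sub_mul_abs h).union (integrableOn_Ioi_cexp_mul_sub_mul_abs h)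

lemma integral_cexp_mul_sub_mul_abs (h : |w.re| < z.re) :
    ∫ v : ℝ, cexp (w * v - z * |v|) = 2 * z / (z ^ 2 - w ^ 2) := by
  have hwz : 0 < (w + z).re := by simp only [add_re]; linarith [neg_abs_le w.re]
  have hzw : (w - z).re < 0 := by simp only [sub_re]; linarith [le_abs_self w.re]
  rw [← intervalIntegral.integral_Iic_add_Ioi (integrableOn_Iic_cexp_mul_sub_mul_abs h)
      (integrableOn_Ioi_cexp_mul_sub_mul_abs h),
    setIntegral_congr_fun measurableSet_Iic (g := fun v : ℝ => cexp ((w + z) * v))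
      (fun v hv => by rw [abs_of_nonpos hv]; push_cast; ring_nf),
    setIntegral_congr_fun measurableSet_Ioi (g := fun v : ℝ => cexp ((w - z) * v))
      (fun v hv => by rw [abs_of_pos hv]; ring_nf),
    integral_exp_mul_complex_Iic hwz, integral_exp_mul_complex_Ioi hzw]
  have h₁ : w + z ≠ 0 := fun h0 => by simp [h0] at hwz
  have h₂ : w - z ≠ 0 := fun h0 => by simp [h0] at hzw
  have h₃ : z ^ 2 - w ^ 2 ≠ 0 := by
    rw [show z ^ 2 - w ^ 2 = -((w + z) * (w - z)) by ring]
    exact neg_ne_zero.mpr (mul_ne_zero h₁ h₂)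
  simp only [ofReal_zero, mul_zero, Complex.exp_zero]
  field_simp
  ring

end TwoSidedLaplace

section RightHalfPlane

variable {z : ℂ}

lemma fourier_cexp_neg_mul_abs (hz : 0 < z.re) (ξ : ℝ) :
    𝓕 (fun x : ℝ => cexp (-(z * |x|))) ξ = 2 * z / (z ^ 2 + (2 * π * ξ) ^ 2) := by
  have hw : |(-2 * π * ξ * I : ℂ).re| < z.re := by simpa using hz
  rw [Real.fourier_real_eq_integral_exp_smul]
  calc _ = ∫ v : ℝ, cexp (-2 * π * ξ * I * v - z * |v|) := by
        congr 1 with v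
        rw [smul_eq_mul, ← Complex.exp_add]; push_cast; ring_nf
    _ = _ := by
        rw [integral_cexp_mul_sub_mul_abs hw]
        congr 1
        linear_combination (-(2 * π * ξ : ℂ) ^ 2) * I_sq

lemma re_div_mul_one_add_abs_le_norm_add_mul_I (hz : 0 < z.re) (t : ℝ) :
    z.re / (1 + z.re + ‖z‖) * (1 + |t|) ≤ ‖z + t * I‖ := by
  have h_re : z.re ≤ ‖z + t * I‖ := by
    simpa using (re_le_norm (z + t * I))
  have h_im : |t| - ‖z‖ ≤ ‖z + t * I‖ := by
    have := norm_sub_le (z + t * I) z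
    simp only [add_sub_cancel_left, norm_mul, norm_real, Real.norm_eq_abs, norm_I, mul_one] at this
    linarith
  -- with `κ = Re z / (1 + Re z + ‖z‖)`, `κ (1 + |t|) = (1 - κ) Re z + κ (|t| - ‖z‖)`
  rw [div_mul_eq_mul_div, div_le_iff₀ (by positivity)]
  nlinarith [mul_le_mul_of_nonneg_left h_re (by positivity : (0 : ℝ) ≤ 1 + ‖z‖),
    mul_le_mul_of_nonneg_left h_im hz.le]

lemma mul_one_add_sq_le_norm_sq_add_sq (hz : 0 < z.re) (t : ℝ) :
    (z.re / (1 + z.re + ‖z‖)) ^ 2 * (1 + t ^ 2) ≤ ‖(t : ℂ) ^ 2 + z ^ 2‖ := by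
  have hfac : (t : ℂ) ^ 2 + z ^ 2 = (z + t * I) * (z + (-t : ℝ) * I) := by
    push_cast; linear_combination (t : ℂ) ^ 2 * I_sq
  have h₁ := re_div_mul_one_add_abs_le_norm_add_mul_I hz t
  have h₂ := re_div_mul_one_add_abs_le_norm_add_mul_I hz (-t)
  rw [abs_neg] at h₂
  rw [hfac, norm_mul]
  calc _ ≤ (z.re / (1 + z.re + ‖z‖) * (1 + |t|)) * (z.re / (1 + z.re + ‖z‖) * (1 + |t|)) := by
        nlinarith [abs_nonneg t, sq_abs t, sq_nonneg (z.re / (1 + z.re + ‖z‖))]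
    _ ≤ _ := mul_le_mul h₁ h₂ (by positivity) (norm_nonneg _)

lemma ofReal_sq_add_sq_ne_zero (hz : 0 < z.re) (t : ℝ) : (t : ℂ) ^ 2 + z ^ 2 ≠ 0 := by
  rw [← norm_pos_iff]
  exact lt_of_lt_of_le (by positivity) (mul_one_add_sq_le_norm_sq_add_sq hz t)

lemma integrable_inv_sq_add_sq (hz : 0 < z.re) :
    Integrable fun t : ℝ => ((t : ℂ) ^ 2 + z ^ 2)⁻¹ := by
  set κ := (z.re / (1 + z.re + ‖z‖)) ^ 2
  have hκ : 0 < κ := by positivity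
  refine (integrable_inv_one_add_sq.const_mul κ⁻¹).mono' (by fun_prop) (ae_of_all _ fun t => ?_)
  rw [norm_inv, ← mul_inv]
  exact inv_anti₀ (by positivity) (mul_one_add_sq_le_norm_sq_add_sq hz t)

lemma integrable_cexp_mul_div_sq_add_sq (hz : 0 < z.re) (x : ℝ) :
    Integrable fun ξ : ℝ => cexp (2 * π * I * ξ * x) / ((2 * π * ξ) ^ 2 + z ^ 2) := by
  have h_inv : Integrable fun ξ : ℝ => ((2 * π * ξ : ℂ) ^ 2 + z ^ 2)⁻¹ := by
    simpa using (integrable_inv_sq_add_sq hz).comp_mul_left' (by positivity : (2 * π : ℝ) ≠ 0)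
  simp_rw [div_eq_mul_inv]
  refine h_inv.bdd_mul (c := 1) (by fun_prop) (ae_of_all _ fun ξ => le_of_eq ?_)
  rw [norm_exp]
  simp

lemma integral_cexp_mul_div_sq_add_sq (hz : 0 < z.re) (x : ℝ) :
    ∫ ξ : ℝ, cexp (2 * π * I * ξ * x) / ((2 * π * ξ) ^ 2 + z ^ 2)
      = cexp (-(z * |x|)) / (2 * z) := by
  set f : ℝ → ℂ := fun x => cexp (-(z * |x|))
  have hz₀ : z ≠ 0 := fun h => by simp [h] at hz
  have hf : Integrable f := by
    simpa [f] using integrable_cexp_mul_sub_mul_abs (w := 0) (by simpa using hz)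
  have h_fourier : 𝓕 f = fun ξ : ℝ => 2 * z / ((2 * π * ξ) ^ 2 + z ^ 2) := by
    ext ξ; rw [fourier_cexp_neg_mul_abs hz, add_comm]
  have hFf : Integrable (𝓕 f) := by
    rw [h_fourier]
    refine ((integrable_cexp_mul_div_sq_add_sq hz 0).const_mul (2 * z)).congr
      (ae_of_all _ fun ξ => ?_)
    simp only [ofReal_zero, mul_zero, Complex.exp_zero]; ring
  have h_inv := hf.fourierInv_fourier_eq hFf (v := x) (by fun_prop)
  rw [Real.fourierInv_eq', h_fourier] at h_inv
  rw [eq_div_iff (by simpa using hz₀), mul_comm, ← integral_const_mul]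
  refine Eq.trans ?_ h_inv
  congr 1 with ξ
  simp only [Real.inner_apply, smul_eq_mul]
  push_cast
  ring_nf

end RightHalfPlane

lemma mul_add_mul_add_eq_of_discrim {K : Type*} [Field K] [NeZero (2 : K)] {a b c s : K}
    (ha : a ≠ 0) (hs : discrim a b c = s * s) (u : K) :
    a * (u + (b - s) / (2 * a)) * (u + (b + s) / (2 * a)) = a * (u * u) + b * u + c := by
  rw [discrim] at hs
  field_simp
  linear_combination hs

lemma div_mul_add_mul_add_eq {K : Type*} [Field K] {ν p q u d₁ d₂ : K} (hν : ν ≠ 0)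
    (hpq : p ≠ q) (hp : u + p ≠ 0) (hq : u + q ≠ 0) :
    (d₁ * u + d₂) / (ν * (u + p) * (u + q))
      = (d₂ - d₁ * p) / (ν * (q - p)) / (u + p) + (d₂ - d₁ * q) / (ν * (p - q)) / (u + q) := by
  have h₁ : q - p ≠ 0 := sub_ne_zero.mpr hpq.symm
  have h₂ : p - q ≠ 0 := sub_ne_zero.mpr hpq
  field_simp
  ring

lemma norm_cexp_neg_mul_abs_le {z : ℂ} {a : ℝ} (ha : a ≤ z.re) (x : ℝ) :
    ‖cexp (-(z * |x|))‖ ≤ rexp (-a * |x|) := by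
  rw [norm_exp]
  gcongr
  simpa using mul_le_mul_of_nonneg_right ha (abs_nonneg x)

lemma norm_div_mul_cexp_neg_mul_abs_le {ν Δ z d₁ d₂ : ℂ} {a : ℝ} (hz : z ≠ 0) (ha : a ≤ z.re)
    (x : ℝ) :
    ‖(d₂ - d₁ * z ^ 2) / (ν * Δ) * (cexp (-(z * |x|)) / (2 * z))‖
      ≤ (‖d₁‖ * ‖z‖ + ‖d₂‖ / ‖z‖) / ‖2 * ν * Δ‖ * rexp (-a * |x|) := by
  have hz' : 0 < ‖z‖ := norm_pos_iff.mpr hz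
  have h_num : ‖d₂ - d₁ * z ^ 2‖ ≤ ‖d₁‖ * ‖z‖ ^ 2 + ‖d₂‖ := by
    refine (norm_sub_le _ _).trans ?_
    rw [norm_mul, norm_pow, add_comm]
  calc _ = ‖d₂ - d₁ * z ^ 2‖ / (‖2 * ν * Δ‖ * ‖z‖) * ‖cexp (-(z * |x|))‖ := by
        simp only [norm_mul, norm_div, Complex.norm_ofNat]; ring
    _ ≤ (‖d₁‖ * ‖z‖ ^ 2 + ‖d₂‖) / (‖2 * ν * Δ‖ * ‖z‖) * rexp (-a * |x|) := by
        gcongr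
        exact norm_cexp_neg_mul_abs_le ha x
    _ = _ := by
        congr 1
        field_simp

section PartialFractions

variable {ν z₁ z₂ : ℂ}

theorem integral_div_mul_sq_add_sq_mul_cexp (hν : ν ≠ 0) (hz₁ : 0 < z₁.re) (hz₂ : 0 < z₂.re)
    (hz : z₁ ^ 2 ≠ z₂ ^ 2) (d₁ d₂ : ℂ) (x : ℝ) :
    ∫ ξ : ℝ, (d₁ * (2 * π * ξ) ^ 2 + d₂) /
        (ν * ((2 * π * ξ) ^ 2 + z₁ ^ 2) * ((2 * π * ξ) ^ 2 + z₂ ^ 2)) * cexp (2 * π * I * ξ * x)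
      = (d₂ - d₁ * z₁ ^ 2) / (ν * (z₂ ^ 2 - z₁ ^ 2)) * (cexp (-(z₁ * |x|)) / (2 * z₁))
        + (d₂ - d₁ * z₂ ^ 2) / (ν * (z₁ ^ 2 - z₂ ^ 2)) * (cexp (-(z₂ * |x|)) / (2 * z₂)) := by
  have h_split (ξ : ℝ) :
      (d₁ * (2 * π * ξ) ^ 2 + d₂) / (ν * ((2 * π * ξ) ^ 2 + z₁ ^ 2) * ((2 * π * ξ) ^ 2 + z₂ ^ 2))
          * cexp (2 * π * I * ξ * x)
        = (d₂ - d₁ * z₁ ^ 2) / (ν * (z₂ ^ 2 - z₁ ^ 2))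
            * (cexp (2 * π * I * ξ * x) / ((2 * π * ξ) ^ 2 + z₁ ^ 2))
          + (d₂ - d₁ * z₂ ^ 2) / (ν * (z₁ ^ 2 - z₂ ^ 2))
            * (cexp (2 * π * I * ξ * x) / ((2 * π * ξ) ^ 2 + z₂ ^ 2)) := by
    rw [div_mul_add_mul_add_eq hν hz (by exact_mod_cast ofReal_sq_add_sq_ne_zero hz₁ (2 * π * ξ))
      (by exact_mod_cast ofReal_sq_add_sq_ne_zero hz₂ (2 * π * ξ))]
    ring
  rw [integral_congr_ae (ae_of_all _ h_split),
    integral_add ((integrable_cexp_mul_div_sq_add_sq hz₁ x).const_mul _)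
      ((integrable_cexp_mul_div_sq_add_sq hz₂ x).const_mul _),
    integral_const_mul, integral_const_mul, integral_cexp_mul_div_sq_add_sq hz₁,
    integral_cexp_mul_div_sq_add_sq hz₂]

theorem norm_integral_div_mul_sq_add_sq_mul_cexp_le (hν : ν ≠ 0) (hz₁ : 0 < z₁.re)
    (hz₂ : 0 < z₂.re) (hz : z₁ ^ 2 ≠ z₂ ^ 2) (d₁ d₂ : ℂ) (x : ℝ) :
    ‖∫ ξ : ℝ, (d₁ * (2 * π * ξ) ^ 2 + d₂) /
        (ν * ((2 * π * ξ) ^ 2 + z₁ ^ 2) * ((2 * π * ξ) ^ 2 + z₂ ^ 2)) * cexp (2 * π * I * ξ * x)‖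
      ≤ (‖d₁‖ * ‖z₁‖ + ‖d₂‖ / ‖z₁‖ + ‖d₁‖ * ‖z₂‖ + ‖d₂‖ / ‖z₂‖) / ‖2 * ν * (z₁ ^ 2 - z₂ ^ 2)‖
        * rexp (-min z₁.re z₂.re * |x|) := by
  have h₁ := norm_div_mul_cexp_neg_mul_abs_le (ν := ν) (Δ := z₂ ^ 2 - z₁ ^ 2) (d₁ := d₁)
    (d₂ := d₂) (fun h => by simp [h] at hz₁) (min_le_left z₁.re z₂.re) x
  have h₂ := norm_div_mul_cexp_neg_mul_abs_le (ν := ν) (Δ := z₁ ^ 2 - z₂ ^ 2) (d₁ := d₁)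
    (d₂ := d₂) (fun h => by simp [h] at hz₂) (min_le_right z₁.re z₂.re) x
  rw [show 2 * ν * (z₂ ^ 2 - z₁ ^ 2) = -(2 * ν * (z₁ ^ 2 - z₂ ^ 2)) by ring, norm_neg] at h₁
  rw [integral_div_mul_sq_add_sq_mul_cexp hν hz₁ hz₂ hz]
  calc _ ≤ _ := norm_add_le _ _
    _ ≤ _ := add_le_add h₁ h₂
    _ = _ := by ring

end PartialFractions

theorem inverse_fourier_decay_complex_roots_general
    (ν ν₃ lam₅ lam₆ lam₇ : ℝ) (hν : 0 < ν)
    (D : ℝ) (hD : D = (ν * ν₃ - lam₆ + 1) ^ 2 + 4 * ν * (ν₃ * lam₆ - ν₃ + lam₅ * lam₇))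
    (hDneg : D < 0)
    (z₁ z₂ : ℂ)
    (hz₁ : z₁ ^ 2 = (((ν * ν₃ - lam₆ + 1 : ℝ) : ℂ) - (Real.sqrt (-D) : ℂ) * Complex.I) /
      ((2 * ν : ℝ) : ℂ))
    (hz₁re : 0 < z₁.re)
    (hz₂ : z₂ ^ 2 = (((ν * ν₃ - lam₆ + 1 : ℝ) : ℂ) + (Real.sqrt (-D) : ℂ) * Complex.I) /
      ((2 * ν : ℝ) : ℂ))
    (hz₂re : 0 < z₂.re)
    (a : ℝ) (ha : a = min z₁.re z₂.re)
    (d₁ d₂ : ℝ) (C₀ : ℝ)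
    (hC₀ : C₀ = (|d₁| * ‖z₁‖ + |d₂| / ‖z₁‖ + |d₁| * ‖z₂‖ + |d₂| / ‖z₂‖) /
      ‖2 * (ν : ℂ) * (z₁ ^ 2 - z₂ ^ 2)‖) :
    ∀ x : ℝ,
      ‖∫ ξ : ℝ, (((d₁ * (2 * π * ξ) ^ 2 + d₂) /
          ((-ν * (2 * π * ξ) ^ 2 + lam₆ - 1) * (-(2 * π * ξ) ^ 2 - ν₃) - lam₅ * lam₇) : ℝ) : ℂ) *
          Complex.exp (2 * (π : ℂ) * Complex.I * (ξ : ℂ) * (x : ℂ))‖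
        ≤ C₀ * Real.exp (-a * |x|) := by
  intro x
  have hν₀ : (ν : ℂ) ≠ 0 := ofReal_ne_zero.mpr hν.ne'
  have hs₀ : Real.sqrt (-D) ≠ 0 := (Real.sqrt_pos.mpr (neg_pos.mpr hDneg)).ne'
  have hs : discrim (ν : ℂ) (ν * ν₃ - lam₆ + 1) (-(ν₃ * lam₆ - ν₃ + lam₅ * lam₇))
      = (Real.sqrt (-D) * I) * (Real.sqrt (-D) * I) := by
    have h_sq : (Real.sqrt (-D) : ℂ) ^ 2 = -D := by
      exact_mod_cast Real.sq_sqrt (neg_nonneg.mpr hDneg.le)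
    have hD' : (D : ℂ) = (ν * ν₃ - lam₆ + 1) ^ 2 + 4 * ν * (ν₃ * lam₆ - ν₃ + lam₅ * lam₇) := by
      exact_mod_cast hD
    rw [discrim]
    linear_combination -hD' + h_sq - (Real.sqrt (-D) : ℂ) ^ 2 * I_sq
  push_cast at hz₁ hz₂
  have h_det (t : ℂ) : (-ν * t ^ 2 + lam₆ - 1) * (-t ^ 2 - ν₃) - lam₅ * lam₇
      = ν * (t ^ 2 + z₁ ^ 2) * (t ^ 2 + z₂ ^ 2) := by
    rw [hz₁, hz₂, mul_add_mul_add_eq_of_discrim hν₀ hs]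
    ring
  have h_roots : z₁ ^ 2 ≠ z₂ ^ 2 := by
    rw [hz₁, hz₂]
    intro h
    rw [div_left_inj' (by simpa using hν₀), sub_eq_add_neg, add_right_inj, neg_eq_self,
      mul_eq_zero, ofReal_eq_zero] at h
    exact h.elim hs₀ I_ne_zero
  have key := norm_integral_div_mul_sq_add_sq_mul_cexp_le hν₀ hz₁re hz₂re h_roots d₁ d₂ x
  simp only [norm_real, Real.norm_eq_abs] at key
  subst ha hC₀
  convert key using 5 with ξ
  push_cast
  rw [h_det]

/-- Exponential decay of the inverse Fourier transform of
`ξ ↦ (d₁(2πξ)² + d₂)/det l(ξ)` in the complex-root case `D < 0`, where `det l(ξ)` is the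
determinant of the Thomas symbol and `z₁, z₂` are the square roots with positive real part
of `(νν₃ − λ₆ + 1 ∓ i√(−D))/(2ν)`. -/
theorem inverse_fourier_decay_complex_roots
    (ν ν₃ lam₅ lam₆ lam₇ : ℝ) (hν : 0 < ν) (hν₃ : 0 < ν₃)
    (D : ℝ) (hD : D = (ν * ν₃ - lam₆ + 1) ^ 2 + 4 * ν * (ν₃ * lam₆ - ν₃ + lam₅ * lam₇))
    (hDneg : D < 0)
    (z₁ z₂ : ℂ)
    (hz₁ : z₁ ^ 2 = (((ν * ν₃ - lam₆ + 1 : ℝ) : ℂ) - (Real.sqrt (-D) : ℂ) * Complex.I) /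
      ((2 * ν : ℝ) : ℂ))
    (hz₁re : 0 < z₁.re)
    (hz₂ : z₂ ^ 2 = (((ν * ν₃ - lam₆ + 1 : ℝ) : ℂ) + (Real.sqrt (-D) : ℂ) * Complex.I) /
      ((2 * ν : ℝ) : ℂ))
    (hz₂re : 0 < z₂.re)
    (a : ℝ) (ha : a = min z₁.re z₂.re)
    (d₁ d₂ : ℝ) (C₀ : ℝ)
    (hC₀ : C₀ = (|d₁| * ‖z₁‖ + |d₂| / ‖z₁‖ + |d₁| * ‖z₂‖ + |d₂| / ‖z₂‖) /
      ‖2 * (ν : ℂ) * (z₁ ^ 2 - z₂ ^ 2)‖) :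
    ∀ x : ℝ,
      ‖∫ ξ : ℝ, (((d₁ * (2 * π * ξ) ^ 2 + d₂) /
          ((-ν * (2 * π * ξ) ^ 2 + lam₆ - 1) * (-(2 * π * ξ) ^ 2 - ν₃) - lam₅ * lam₇) : ℝ) : ℂ) *
          Complex.exp (2 * (π : ℂ) * Complex.I * (ξ : ℂ) * (x : ℂ))‖
        ≤ C₀ * Real.exp (-a * |x|) :=
  inverse_fourier_decay_complex_roots_general ν ν₃ lam₅ lam₆ lam₇ hν D hD hDneg z₁ z₂ hz₁ hz₁re hz₂
    hz₂re a ha d₁ d₂ C₀ hC₀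
end

section
/- Let ν > 0, ν₃ > 0 and λ₅, λ₆, λ₇ ∈ ℝ, and suppose D := (νν₃ − λ₆ + 1)² + 4ν(ν₃λ₆ − ν₃ + λ₅λ₇) > 0 and νν₃ − λ₆ + 1 > √D. Set z₁ := √((νν₃ − λ₆ + 1 + √D)/(2ν)) and z₂ := √((νν₃ − λ₆ + 1 − √D)/(2ν)), which are positive real numbers with z₁ > z₂, let a := min(z₁, z₂) = z₂ > 0 and, for d₁, d₂ ∈ ℝ, C₀ := ( |d₁|·z₁ + |d₂|/z₁ + |d₁|·z₂ + |d₂|/z₂ ) / (2ν(z₁² − z₂²)). Then for all x ∈ ℝ, | ∫_ℝ (d₁(2πξ)² + d₂)/det l(ξ) · e^{2πiξx} dξ | ≤ C₀ · e^{−a|x|}. -/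
/-! By Vieta, the determinant factors as `ν((2πξ)² + z₁²)((2πξ)² + z₂²)` with `0 < z₂ < z₁`, so
the integrand splits into partial fractions `A/((2πξ)² + z₁²) + B/((2πξ)² + z₂²)`. The Fourier
transform of `e^{-z|t|}` is `2z/((2πξ)² + z²)` (integrate the two exponentials on either side of
`0`), so Fourier inversion turns each fraction into `e^{-z|x|}/(2z)`. Bounding `|A|`, `|B|` and
`e^{-z₁|x|} ≤ e^{-z₂|x|}` gives the constant `C₀`. -/

open Real Complex MeasureTheory Set FourierTransform

lemma integrable_exp_neg_mul_abs {z : ℝ} (hz : 0 < z) :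
    Integrable fun t : ℝ => Real.exp (-z * |t|) := by
  have hIic : IntegrableOn (fun t : ℝ => Real.exp (-z * |t|)) (Iic 0) :=
    (integrableOn_exp_mul_Iic hz 0).congr_fun (fun t ht => by
      rw [abs_of_nonpos ht, neg_mul_neg]) measurableSet_Iic
  have hIoi : IntegrableOn (fun t : ℝ => Real.exp (-z * |t|)) (Ioi 0) :=
    (integrableOn_exp_mul_Ioi (neg_neg_of_pos hz) 0).congr_fun (fun t ht => by
      rw [abs_of_pos ht]) measurableSet_Ioi
  rw [← integrableOn_univ, ← Iic_union_Ioi (a := (0 : ℝ))]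
  exact hIic.union hIoi

lemma fourier_exp_neg_mul_abs {z : ℝ} (hz : 0 < z) (ξ : ℝ) :
    𝓕 (fun t : ℝ => (Real.exp (-z * |t|) : ℂ)) ξ = 2 * z / ((2 * π * ξ) ^ 2 + z ^ 2) := by
  set w : ℂ := 2 * π * ξ * I
  have hIic : EqOn (fun t : ℝ => Complex.exp (↑(-2 * π * t * ξ) * I) • (Real.exp (-z * |t|) : ℂ))
      (fun t : ℝ => Complex.exp ((z - w) * t)) (Iic 0) := fun t ht => by
    simp only [smul_eq_mul, ofReal_exp, ← Complex.exp_add, abs_of_nonpos (show t ≤ 0 from ht), w]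
    congr 1; push_cast; ring
  have hIoi : EqOn (fun t : ℝ => Complex.exp (↑(-2 * π * t * ξ) * I) • (Real.exp (-z * |t|) : ℂ))
      (fun t : ℝ => Complex.exp (-(z + w) * t)) (Ioi 0) := fun t ht => by
    simp only [smul_eq_mul, ofReal_exp, ← Complex.exp_add, abs_of_pos (show 0 < t from ht), w]
    congr 1; push_cast; ring
  have hre₁ : 0 < (z - w).re := by simpa [w] using hz
  have hre₂ : (-(z + w)).re < 0 := by simpa [w] using hz
  rw [Real.fourier_real_eq_integral_exp_smul, ← intervalIntegral.integral_Iic_add_Ioi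
    ((integrableOn_exp_mul_complex_Iic hre₁ 0).congr_fun hIic.symm measurableSet_Iic)
    ((integrableOn_exp_mul_complex_Ioi hre₂ 0).congr_fun hIoi.symm measurableSet_Ioi),
    setIntegral_congr_fun measurableSet_Iic hIic, setIntegral_congr_fun measurableSet_Ioi hIoi,
    integral_exp_mul_complex_Iic hre₁, integral_exp_mul_complex_Ioi hre₂]
  have hsub : (z : ℂ) - w ≠ 0 := fun h => by simp [h] at hre₁
  have hadd : (z : ℂ) + w ≠ 0 := fun h => by simp [h] at hre₂
  have hfactor : ((2 * π * ξ) ^ 2 + z ^ 2 : ℂ) = (z - w) * (z + w) := by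
    simp only [w]; ring_nf; rw [I_sq]; ring
  simp only [hfactor, ofReal_zero, mul_zero, Complex.exp_zero]
  field_simp
  ring

lemma integrable_inv_two_pi_mul_sq_add_sq {z : ℝ} (hz : 0 < z) :
    Integrable fun ξ : ℝ => ((2 * π * ξ) ^ 2 + z ^ 2)⁻¹ := by
  have h := (integrable_inv_one_add_sq.comp_mul_left' (by positivity : 2 * π / z ≠ 0)).const_mul
    (z ^ 2)⁻¹
  refine h.congr (ae_of_all _ fun ξ => ?_)
  dsimp only
  field_simp
  ring

lemma integral_inv_two_pi_mul_sq_add_sq_mul_exp {z : ℝ} (hz : 0 < z) (x : ℝ) :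
    ∫ ξ : ℝ, ((((2 * π * ξ) ^ 2 + z ^ 2)⁻¹ : ℝ) : ℂ) * Complex.exp (2 * π * I * ξ * x) =
      ((Real.exp (-z * |x|) / (2 * z) : ℝ) : ℂ) := by
  set f : ℝ → ℂ := fun t => (Real.exp (-z * |t|) : ℂ)
  have hFf : 𝓕 f = fun ξ : ℝ => (2 * z : ℂ) * ((((2 * π * ξ) ^ 2 + z ^ 2)⁻¹ : ℝ) : ℂ) := by
    ext ξ
    rw [fourier_exp_neg_mul_abs hz]
    push_cast
    ring
  have hFf_int : Integrable (𝓕 f) := by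
    rw [hFf]
    exact (integrable_inv_two_pi_mul_sq_add_sq hz).ofReal.const_mul _
  have hinv := (integrable_exp_neg_mul_abs hz).ofReal.fourierInv_fourier_eq hFf_int
    (v := x) (by fun_prop : Continuous f).continuousAt
  rw [Real.fourierInv_eq', hFf] at hinv
  simp only [smul_eq_mul, Real.inner_apply] at hinv
  have hz0 : (z : ℂ) ≠ 0 := by exact_mod_cast hz.ne'
  calc _ = (2 * z : ℂ)⁻¹ * ∫ ξ : ℝ, Complex.exp (↑(2 * π * (ξ * x)) * I) *
        (2 * z * ((((2 * π * ξ) ^ 2 + z ^ 2)⁻¹ : ℝ) : ℂ)) := by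
        rw [← integral_const_mul]
        congr 1 with ξ
        push_cast
        field_simp
    _ = _ := by
        rw [hinv]
        push_cast [f]
        ring

lemma integrable_inv_two_pi_mul_sq_add_sq_mul_exp {z : ℝ} (hz : 0 < z) (x : ℝ) :
    Integrable fun ξ : ℝ =>
      ((((2 * π * ξ) ^ 2 + z ^ 2)⁻¹ : ℝ) : ℂ) * Complex.exp (2 * π * I * ξ * x) :=
  (integrable_inv_two_pi_mul_sq_add_sq hz).ofReal.mul_bdd (c := 1)
    (by fun_prop : Continuous _).aestronglyMeasurable (ae_of_all _ fun ξ => by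
      rw [show (2 * π * I * ξ * x : ℂ) = ↑(2 * π * ξ * x) * I by push_cast; ring,
        norm_exp_ofReal_mul_I])

lemma div_quadratic_eq_partial_fractions {ν p q s : ℝ} (hν : ν ≠ 0) (hpq : p ≠ q)
    (hp : s + p ≠ 0) (hq : s + q ≠ 0) (d₁ d₂ : ℝ) :
    (d₁ * s + d₂) / (ν * (s + p) * (s + q)) =
      (d₁ * p - d₂) / (ν * (p - q)) * (s + p)⁻¹ + (d₂ - d₁ * q) / (ν * (p - q)) * (s + q)⁻¹ := by
  have : p - q ≠ 0 := sub_ne_zero.2 hpq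
  field_simp
  ring

lemma integral_rational_mul_exp {ν z₁ z₂ : ℝ} (hν : ν ≠ 0) (hz₁ : 0 < z₁) (hz₂ : 0 < z₂)
    (hz : z₁ ^ 2 ≠ z₂ ^ 2) (d₁ d₂ x : ℝ) :
    ∫ ξ : ℝ, (((d₁ * (2 * π * ξ) ^ 2 + d₂) /
        (ν * ((2 * π * ξ) ^ 2 + z₁ ^ 2) * ((2 * π * ξ) ^ 2 + z₂ ^ 2)) : ℝ) : ℂ) *
        Complex.exp (2 * π * I * ξ * x) =
      (((d₁ * z₁ ^ 2 - d₂) / (ν * (z₁ ^ 2 - z₂ ^ 2)) * (Real.exp (-z₁ * |x|) / (2 * z₁)) +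
        (d₂ - d₁ * z₂ ^ 2) / (ν * (z₁ ^ 2 - z₂ ^ 2)) * (Real.exp (-z₂ * |x|) / (2 * z₂)) : ℝ) :
        ℂ) := by
  have hpf (ξ : ℝ) := div_quadratic_eq_partial_fractions (s := (2 * π * ξ) ^ 2) hν hz
    (by positivity) (by positivity) d₁ d₂
  simp_rw [hpf, ofReal_add, ofReal_mul, add_mul, mul_assoc ((_ : ℝ) : ℂ)]
  rw [integral_add ((integrable_inv_two_pi_mul_sq_add_sq_mul_exp hz₁ x).const_mul _)
      ((integrable_inv_two_pi_mul_sq_add_sq_mul_exp hz₂ x).const_mul _),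
    integral_const_mul, integral_const_mul, integral_inv_two_pi_mul_sq_add_sq_mul_exp hz₁,
    integral_inv_two_pi_mul_sq_add_sq_mul_exp hz₂]

lemma abs_partial_fractions_exp_le {ν z₁ z₂ : ℝ} (hν : 0 < ν) (hz₂ : 0 < z₂) (h : z₂ < z₁)
    (d₁ d₂ x : ℝ) :
    |(d₁ * z₁ ^ 2 - d₂) / (ν * (z₁ ^ 2 - z₂ ^ 2)) * (Real.exp (-z₁ * |x|) / (2 * z₁)) +
        (d₂ - d₁ * z₂ ^ 2) / (ν * (z₁ ^ 2 - z₂ ^ 2)) * (Real.exp (-z₂ * |x|) / (2 * z₂))| ≤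
      (|d₁| * z₁ + |d₂| / z₁ + |d₁| * z₂ + |d₂| / z₂) / (2 * ν * (z₁ ^ 2 - z₂ ^ 2)) *
        Real.exp (-z₂ * |x|) := by
  have hz₁ : 0 < z₁ := hz₂.trans h
  have hgap : 0 < z₁ ^ 2 - z₂ ^ 2 := by nlinarith
  have hexp : Real.exp (-z₁ * |x|) ≤ Real.exp (-z₂ * |x|) :=
    Real.exp_le_exp.2 (mul_le_mul_of_nonneg_right (neg_le_neg h.le) (abs_nonneg x))
  have hA : |d₁ * z₁ ^ 2 - d₂| ≤ |d₁| * z₁ ^ 2 + |d₂| :=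
    (abs_sub _ _).trans_eq (by rw [abs_mul, abs_sq])
  have hB : |d₂ - d₁ * z₂ ^ 2| ≤ |d₁| * z₂ ^ 2 + |d₂| :=
    (abs_sub _ _).trans_eq (by rw [abs_mul, abs_sq, add_comm])
  calc _ ≤ |d₁ * z₁ ^ 2 - d₂| / (ν * (z₁ ^ 2 - z₂ ^ 2)) * (Real.exp (-z₁ * |x|) / (2 * z₁)) +
        |d₂ - d₁ * z₂ ^ 2| / (ν * (z₁ ^ 2 - z₂ ^ 2)) * (Real.exp (-z₂ * |x|) / (2 * z₂)) := by
        refine (abs_add_le _ _).trans_eq ?_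
        simp only [abs_mul, abs_div, abs_of_pos hν, abs_of_pos hgap, abs_of_pos hz₁,
          abs_of_pos hz₂, abs_two, Real.abs_exp]
    _ ≤ (|d₁| * z₁ ^ 2 + |d₂|) / (ν * (z₁ ^ 2 - z₂ ^ 2)) * (Real.exp (-z₂ * |x|) / (2 * z₁)) +
        (|d₁| * z₂ ^ 2 + |d₂|) / (ν * (z₁ ^ 2 - z₂ ^ 2)) * (Real.exp (-z₂ * |x|) / (2 * z₂)) := by
        gcongr
    _ = _ := by
        field_simp
        ring

lemma norm_integral_rational_mul_exp_le {ν z₁ z₂ : ℝ} (hν : 0 < ν) (hz₂ : 0 < z₂) (h : z₂ < z₁)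
    (d₁ d₂ x : ℝ) :
    ‖∫ ξ : ℝ, (((d₁ * (2 * π * ξ) ^ 2 + d₂) /
        (ν * ((2 * π * ξ) ^ 2 + z₁ ^ 2) * ((2 * π * ξ) ^ 2 + z₂ ^ 2)) : ℝ) : ℂ) *
        Complex.exp (2 * π * I * ξ * x)‖ ≤
      (|d₁| * z₁ + |d₂| / z₁ + |d₁| * z₂ + |d₂| / z₂) / (2 * ν * (z₁ ^ 2 - z₂ ^ 2)) *
        Real.exp (-z₂ * |x|) := by
  rw [integral_rational_mul_exp hν.ne' (hz₂.trans h) hz₂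
    (pow_lt_pow_left₀ h hz₂.le two_ne_zero).ne', norm_real, Real.norm_eq_abs]
  exact abs_partial_fractions_exp_le hν hz₂ h d₁ d₂ x

lemma thomas_det_eq_mul {ν ν₃ lam₅ lam₆ lam₇ D z₁ z₂ : ℝ} (hν : ν ≠ 0)
    (hD : D = (ν * ν₃ - lam₆ + 1) ^ 2 + 4 * ν * (ν₃ * lam₆ - ν₃ + lam₅ * lam₇)) (hD₀ : 0 ≤ D)
    (hz₁ : z₁ ^ 2 = (ν * ν₃ - lam₆ + 1 + √D) / (2 * ν))
    (hz₂ : z₂ ^ 2 = (ν * ν₃ - lam₆ + 1 - √D) / (2 * ν)) (s : ℝ) :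
    (-ν * s + lam₆ - 1) * (-s - ν₃) - lam₅ * lam₇ = ν * (s + z₁ ^ 2) * (s + z₂ ^ 2) := by
  have hsum : ν * (z₁ ^ 2 + z₂ ^ 2) = ν * ν₃ - lam₆ + 1 := by
    rw [hz₁, hz₂]
    field_simp
    ring
  have hprod : ν * (z₁ ^ 2 * z₂ ^ 2) = ν₃ - ν₃ * lam₆ - lam₅ * lam₇ := by
    rw [hz₁, hz₂]
    field_simp
    linear_combination (-1) * Real.sq_sqrt hD₀ - hD
  linear_combination (-s) * hsum - hprod

theorem inverse_fourier_decay_real_roots_general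
    (ν ν₃ lam₅ lam₆ lam₇ : ℝ) (hν : 0 < ν)
    (D : ℝ) (hD : D = (ν * ν₃ - lam₆ + 1) ^ 2 + 4 * ν * (ν₃ * lam₆ - ν₃ + lam₅ * lam₇))
    (hDpos : 0 < D)
    (hroot : ν * ν₃ - lam₆ + 1 > Real.sqrt D)
    (z₁ z₂ : ℝ)
    (hz₁ : z₁ = Real.sqrt ((ν * ν₃ - lam₆ + 1 + Real.sqrt D) / (2 * ν)))
    (hz₂ : z₂ = Real.sqrt ((ν * ν₃ - lam₆ + 1 - Real.sqrt D) / (2 * ν)))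
    (a : ℝ) (ha : a = min z₁ z₂)
    (d₁ d₂ : ℝ) (C₀ : ℝ)
    (hC₀ : C₀ = (|d₁| * z₁ + |d₂| / z₁ + |d₁| * z₂ + |d₂| / z₂) /
      (2 * ν * (z₁ ^ 2 - z₂ ^ 2))) :
    ∀ x : ℝ,
      ‖∫ ξ : ℝ, (((d₁ * (2 * π * ξ) ^ 2 + d₂) /
          ((-ν * (2 * π * ξ) ^ 2 + lam₆ - 1) * (-(2 * π * ξ) ^ 2 - ν₃) - lam₅ * lam₇) : ℝ) : ℂ) *
          Complex.exp (2 * (π : ℂ) * Complex.I * (ξ : ℂ) * (x : ℂ))‖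
        ≤ C₀ * Real.exp (-a * |x|) := by
  intro x
  have hsqrtD : 0 < √D := Real.sqrt_pos.2 hDpos
  have hroot₂ : 0 < (ν * ν₃ - lam₆ + 1 - √D) / (2 * ν) := div_pos (by linarith) (by positivity)
  have hroot₁ : (ν * ν₃ - lam₆ + 1 - √D) / (2 * ν) < (ν * ν₃ - lam₆ + 1 + √D) / (2 * ν) :=
    div_lt_div_of_pos_right (by linarith) (by positivity)
  have hz₂pos : 0 < z₂ := hz₂ ▸ Real.sqrt_pos.2 hroot₂
  have hz₂z₁ : z₂ < z₁ := hz₁ ▸ hz₂ ▸ Real.sqrt_lt_sqrt hroot₂.le hroot₁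
  have hdet := thomas_det_eq_mul hν.ne' hD hDpos.le
    (hz₁ ▸ Real.sq_sqrt (hroot₂.trans hroot₁).le) (hz₂ ▸ Real.sq_sqrt hroot₂.le)
  simp_rw [hdet]
  rw [ha, min_eq_right hz₂z₁.le, hC₀]
  exact norm_integral_rational_mul_exp_le hν hz₂pos hz₂z₁ d₁ d₂ x

/-- Exponential decay of the inverse Fourier transform of
`ξ ↦ (d₁(2πξ)² + d₂)/det l(ξ)` in the real-root case `D > 0`,
`νν₃ − λ₆ + 1 > √D`, where `det l(ξ)` is the determinant of the Thomas symbol and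
`z₁ = √((νν₃ − λ₆ + 1 + √D)/(2ν))`, `z₂ = √((νν₃ − λ₆ + 1 − √D)/(2ν))`. -/
theorem inverse_fourier_decay_real_roots
    (ν ν₃ lam₅ lam₆ lam₇ : ℝ) (hν : 0 < ν) (hν₃ : 0 < ν₃)
    (D : ℝ) (hD : D = (ν * ν₃ - lam₆ + 1) ^ 2 + 4 * ν * (ν₃ * lam₆ - ν₃ + lam₅ * lam₇))
    (hDpos : 0 < D)
    (hroot : ν * ν₃ - lam₆ + 1 > Real.sqrt D)
    (z₁ z₂ : ℝ)
    (hz₁ : z₁ = Real.sqrt ((ν * ν₃ - lam₆ + 1 + Real.sqrt D) / (2 * ν)))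
    (hz₂ : z₂ = Real.sqrt ((ν * ν₃ - lam₆ + 1 - Real.sqrt D) / (2 * ν)))
    (a : ℝ) (ha : a = min z₁ z₂)
    (d₁ d₂ : ℝ) (C₀ : ℝ)
    (hC₀ : C₀ = (|d₁| * z₁ + |d₂| / z₁ + |d₁| * z₂ + |d₂| / z₂) /
      (2 * ν * (z₁ ^ 2 - z₂ ^ 2))) :
    ∀ x : ℝ,
      ‖∫ ξ : ℝ, (((d₁ * (2 * π * ξ) ^ 2 + d₂) /
          ((-ν * (2 * π * ξ) ^ 2 + lam₆ - 1) * (-(2 * π * ξ) ^ 2 - ν₃) - lam₅ * lam₇) : ℝ) : ℂ) *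
          Complex.exp (2 * (π : ℂ) * Complex.I * (ξ : ℂ) * (x : ℂ))‖
        ≤ C₀ * Real.exp (-a * |x|) :=
  inverse_fourier_decay_real_roots_general ν ν₃ lam₅ lam₆ lam₇ hν D hD hDpos hroot z₁ z₂ hz₁ hz₂ a
    ha d₁ d₂ C₀ hC₀
end
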